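/- Every 1/2-derivation of the Virasoro algebra Vir is trivial, i.e., a scalar multiple of the identity map. -/

import Mathlib

/-- The underlying space of the Virasoro algebra, with basis
`L n = single (some n) 1` for `n : ℤ` and central charge `c = single none 1`. -/
abbrev Vir : Type := Option ℤ →₀ ℂ

/-- The Virasoro bracket on basis elements:
`[L m, L n] = (m-n) L (m+n) + ((m³-m)/12) δ_{m+n,0} c`, and `c` is central. -/
noncomputable def virBasic : Option ℤ → Option ℤ → Vir
  | some m, some n =>
      ((m : ℂ) - (n : ℂ)) • Finsupp.single (some (m + n)) (1 : ℂ) +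
      (if m + n = 0 then (((m : ℂ) ^ 3 - (m : ℂ)) / 12) else 0) •
        Finsupp.single (none : Option ℤ) (1 : ℂ)
  | _, _ => 0

/-- The Virasoro Lie bracket, extended bilinearly from basis elements. -/
noncomputable def virBracket (f g : Vir) : Vir :=
  f.sum fun p c => g.sum fun q d => (c * d) • virBasic p q

/-!
Write `φ (L n) = ∑ₖ a(n, k) L k + b(n) c`. Since `[L (j+1), c] = 0`, also `[L (j+1), φ c] = 0`,
whose `L (2j+1)`-coefficient is the `L j`-coefficient of `φ c`; so `φ c` is central. Comparing the
`L k`-coefficients of `φ [L 0, L n]` gives `a(n, k) = a(0, k - n)` for `k ≠ 2n`, and comparing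
central coefficients of `φ [L 0, L (-j)]` and `φ [L (2j), L (-3j)]` forces `a(0, j) = 0` for
`j ≠ 0`, because the cocycle `(m³ - m)/12` is not linear. Hence `φ (L n) = κ L n + b(n) c`
with `κ = a(0, 0)`, and a few more central coefficients give `b = 0` and `φ c = κ c`.
-/

namespace Vir

noncomputable def L (n : ℤ) : Vir := Finsupp.single (some n) 1

noncomputable def c : Vir := Finsupp.single none 1

noncomputable def cocycle (m : ℤ) : ℂ := ((m : ℂ) ^ 3 - m) / 12

lemma cocycle_neg (m : ℤ) : cocycle (-m) = -cocycle m := by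
  simp only [cocycle, Int.cast_neg]
  ring

lemma virBasic_skew (p q : Option ℤ) : virBasic q p = -virBasic p q := by
  rcases p with _ | m <;> rcases q with _ | n <;> simp only [virBasic, neg_zero]
  rw [add_comm n m, neg_add, ← neg_smul, ← neg_smul, neg_sub]
  congr 2
  split_ifs with h
  · obtain rfl : n = -m := by omega
    exact cocycle_neg m
  · rw [neg_zero]

lemma virBasic_apply_some (m n k : ℤ) :
    virBasic (some m) (some n) (some k) = if m + n = k then (m - n : ℂ) else 0 := by
  simp only [virBasic, Finsupp.add_apply, Finsupp.smul_apply, Finsupp.single_apply, smul_eq_mul]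
  split_ifs <;> simp_all

lemma virBasic_apply_none (m n : ℤ) :
    virBasic (some m) (some n) none = if m + n = 0 then cocycle m else 0 := by
  simp only [virBasic, Finsupp.add_apply, Finsupp.smul_apply, Finsupp.single_apply, smul_eq_mul]
  split_ifs <;> simp_all [cocycle]

lemma virBracket_skew (f g : Vir) : virBracket g f = -virBracket f g := by
  unfold virBracket
  rw [Finsupp.sum_comm]
  simp only [Finsupp.sum, ← Finset.sum_neg_distrib]
  refine Finset.sum_congr rfl fun p _ => Finset.sum_congr rfl fun q _ => ?_
  rw [virBasic_skew p q, smul_neg, mul_comm]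

lemma virBracket_L_left_apply (m : ℤ) (v : Vir) (r : Option ℤ) :
    virBracket (L m) v r = v.sum fun q d => d * virBasic (some m) q r := by
  rw [virBracket, L, Finsupp.sum_single_index (by simp), Finsupp.sum_apply]
  simp only [one_mul, Finsupp.smul_apply, smul_eq_mul]

lemma virBracket_L_left_apply_some (m k : ℤ) (v : Vir) :
    virBracket (L m) v (some k) = (2 * m - k) * v (some (k - m)) := by
  rw [virBracket_L_left_apply, Finsupp.sum_eq_single (some (k - m))]
  · rw [virBasic_apply_some, if_pos (by ring)]
    push_cast
    ring
  · rintro (_ | n) _ hn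
    · simp [virBasic]
    · rw [virBasic_apply_some, if_neg (by rintro rfl; simp at hn), mul_zero]
  · intro; rw [zero_mul]

lemma virBracket_L_left_apply_none (m : ℤ) (v : Vir) :
    virBracket (L m) v none = cocycle m * v (some (-m)) := by
  rw [virBracket_L_left_apply, Finsupp.sum_eq_single (some (-m))]
  · rw [virBasic_apply_none, if_pos (by ring), mul_comm]
  · rintro (_ | n) _ hn
    · simp [virBasic]
    · rw [virBasic_apply_none, if_neg (by rintro h; simp [show n = -m by omega] at hn), mul_zero]
  · intro; rw [zero_mul]

lemma virBracket_L_right_apply_some (n k : ℤ) (v : Vir) :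
    virBracket v (L n) (some k) = (k - 2 * n) * v (some (k - n)) := by
  rw [virBracket_skew, Finsupp.neg_apply, virBracket_L_left_apply_some]
  ring

lemma virBracket_L_right_apply_none (n : ℤ) (v : Vir) :
    virBracket v (L n) none = cocycle (-n) * v (some (-n)) := by
  rw [virBracket_skew, Finsupp.neg_apply, virBracket_L_left_apply_none, cocycle_neg]
  ring

lemma virBracket_L_L (m n : ℤ) :
    virBracket (L m) (L n) = (m - n : ℂ) • L (m + n) + (if m + n = 0 then cocycle m else 0) • c := by
  unfold virBracket L
  rw [Finsupp.sum_single_index (by simp), Finsupp.sum_single_index (by simp), one_mul, one_smul]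
  rfl

lemma virBracket_c (v : Vir) : virBracket v c = 0 := by
  unfold virBracket c
  simp [virBasic]

end Vir

open Vir

def IsHalfDerivation (φ : Vir →ₗ[ℂ] Vir) : Prop :=
  ∀ x y, φ (virBracket x y) = (1 / 2 : ℂ) • (virBracket (φ x) y + virBracket x (φ y))

namespace IsHalfDerivation

variable {φ : Vir →ₗ[ℂ] Vir} (hφ : IsHalfDerivation φ)
include hφ

lemma apply_c_some (j : ℤ) : φ c (some j) = 0 := by
  have hcomm : virBracket (L (j + 1)) (φ c) = 0 := by
    have h := hφ (L (j + 1)) c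
    rw [virBracket_c, virBracket_c, map_zero, zero_add, eq_comm, smul_eq_zero] at h
    exact h.resolve_left (by norm_num)
  have h := congrArg (· (some (2 * j + 1))) hcomm
  simp only [virBracket_L_left_apply_some, show 2 * j + 1 - (j + 1) = j by ring,
    Finsupp.coe_zero, Pi.zero_apply] at h
  push_cast at h
  linear_combination h

lemma map_virBracket_L_L (m n : ℤ) :
    (m - n : ℂ) • φ (L (m + n)) + (if m + n = 0 then cocycle m else 0) • φ c =
      (1 / 2 : ℂ) • (virBracket (φ (L m)) (L n) + virBracket (L m) (φ (L n))) := by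
  rw [← hφ, virBracket_L_L, map_add, map_smul, map_smul]

lemma apply_L_add_some (m n k : ℤ) :
    (m - n) * φ (L (m + n)) (some k) =
      ((k - 2 * n) * φ (L m) (some (k - n)) + (2 * m - k) * φ (L n) (some (k - m))) / 2 := by
  have h := congrArg (· (some k)) (hφ.map_virBracket_L_L m n)
  simp only [Finsupp.add_apply, Finsupp.smul_apply, smul_eq_mul, hφ.apply_c_some,
    virBracket_L_right_apply_some, virBracket_L_left_apply_some] at h
  linear_combination h

lemma apply_L_add_none (m n : ℤ) :
    (m - n) * φ (L (m + n)) none + (if m + n = 0 then cocycle m else 0) * φ c none =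
      (cocycle (-n) * φ (L m) (some (-n)) + cocycle m * φ (L n) (some (-m))) / 2 := by
  have h := congrArg (· none) (hφ.map_virBracket_L_L m n)
  simp only [Finsupp.add_apply, Finsupp.smul_apply, smul_eq_mul,
    virBracket_L_right_apply_none, virBracket_L_left_apply_none] at h
  linear_combination h

lemma apply_L_some_of_ne (n k : ℤ) (hk : k ≠ 2 * n) :
    φ (L n) (some k) = φ (L 0) (some (k - n)) := by
  have h := hφ.apply_L_add_some 0 n k
  simp only [zero_add, sub_zero, Int.cast_zero] at h
  have hk' : (k - 2 * n : ℂ) ≠ 0 := by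
    rw [sub_ne_zero]
    exact_mod_cast hk
  apply mul_left_cancel₀ hk'
  linear_combination 2 * h

lemma L_zero_apply_some_of_ne (j : ℤ) (hj : j ≠ 0) : φ (L 0) (some j) = 0 := by
  have h₁ := hφ.apply_L_add_none 0 (-j)
  have h₂ := hφ.apply_L_add_none (2 * j) (-3 * j)
  rw [if_neg (by omega), zero_add] at h₁
  rw [if_neg (by omega), hφ.apply_L_some_of_ne (2 * j) _ (by omega),
    hφ.apply_L_some_of_ne (-3 * j) _ (by omega), show 2 * j + -3 * j = -j by ring,
    show -(-3 * j) - 2 * j = j by ring, show -(2 * j) - -3 * j = j by ring] at h₂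
  simp only [cocycle, neg_neg, sub_zero, neg_zero, Int.cast_zero] at h₁ h₂
  -- With b = φ (L (-j)) none, these read j b = ε(j) a / 2 and 5 j b = (ε(3j) + ε(2j)) a / 2,
  -- where a = φ (L 0) (some j) and ε = cocycle; and 5 ε(j) - ε(2j) - ε(3j) = -5 j³ / 2.
  have hj' : (j : ℂ) ≠ 0 := by exact_mod_cast hj
  have h : (j : ℂ) ^ 3 * φ (L 0) (some j) = 0 := by
    push_cast at h₁ h₂
    linear_combination 4 * h₁ - 4 / 5 * h₂
  simpa [hj'] using h

lemma apply_L_some_two_mul (n : ℤ) (hn : n ≠ 0) : φ (L n) (some (2 * n)) = 0 := by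
  have h := hφ.apply_L_add_some (2 * n) (-n) (2 * n)
  rw [hφ.apply_L_some_of_ne (2 * n) _ (by omega), hφ.apply_L_some_of_ne (-n) _ (by omega),
    show 2 * n - -n - 2 * n = n by ring, show 2 * n - 2 * n - -n = n by ring,
    hφ.L_zero_apply_some_of_ne n hn, show 2 * n + -n = n by ring] at h
  have hn' : (n : ℂ) ≠ 0 := by exact_mod_cast hn
  have h' : (n : ℂ) * φ (L n) (some (2 * n)) = 0 := by
    push_cast at h
    linear_combination h / 3
  simpa [hn'] using h'

lemma apply_L_some (n k : ℤ) : φ (L n) (some k) = if k = n then φ (L 0) (some 0) else 0 := by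
  by_cases hk : k = 2 * n
  · subst hk
    by_cases hn : n = 0
    · subst hn
      simp
    · rw [hφ.apply_L_some_two_mul n hn, if_neg (by omega)]
  · rw [hφ.apply_L_some_of_ne n k hk]
    split_ifs with hkn
    · rw [hkn, sub_self]
    · exact hφ.L_zero_apply_some_of_ne _ (by omega)

lemma apply_L_none (n : ℤ) : φ (L n) none = 0 := by
  by_cases hn : n = 0
  · have h := hφ.apply_L_add_none 1 (-1)
    rw [show (1 : ℤ) + -1 = 0 by norm_num, if_pos rfl, ← hn] at h
    simp only [cocycle] at h
    push_cast at h
    linear_combination h / 2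
  · have h := hφ.apply_L_add_none n 0
    rw [if_neg (by omega), hφ.L_zero_apply_some_of_ne _ (by omega), add_zero] at h
    simp only [cocycle, Int.cast_zero, sub_zero, neg_zero] at h
    have hn' : (n : ℂ) ≠ 0 := by exact_mod_cast hn
    have h' : (n : ℂ) * φ (L n) none = 0 := by
      linear_combination h
    simpa [hn'] using h'

lemma apply_c_none : φ c none = φ (L 0) (some 0) := by
  have h := hφ.apply_L_add_none 2 (-2)
  rw [if_pos (by ring), hφ.apply_L_none, hφ.apply_L_some 2, hφ.apply_L_some (-2), if_pos (by ring),
    if_pos (by ring)] at h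
  simp only [cocycle] at h
  push_cast at h
  linear_combination 2 * h

lemma map_L (n : ℤ) : φ (L n) = φ (L 0) (some 0) • L n := by
  ext (_ | k)
  · rw [Finsupp.smul_apply, hφ.apply_L_none]
    simp [L]
  · rw [Finsupp.smul_apply, hφ.apply_L_some]
    simp [L, Finsupp.single_apply, eq_comm]

lemma map_c : φ c = φ (L 0) (some 0) • c := by
  ext (_ | k)
  · rw [Finsupp.smul_apply, hφ.apply_c_none]
    simp [c]
  · rw [Finsupp.smul_apply, hφ.apply_c_some]
    simp [c]

theorem eq_smul_id : φ = φ (L 0) (some 0) • LinearMap.id := by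
  refine Finsupp.basisSingleOne.ext fun p => ?_
  rcases p with _ | n
  · exact hφ.map_c
  · exact hφ.map_L n

end IsHalfDerivation

/-- Every 1/2-derivation of the Virasoro algebra is trivial,
i.e., a scalar multiple of the identity. -/
theorem virasoro_half_derivation_trivial
    (φ : Vir →ₗ[ℂ] Vir)
    (hφ : ∀ x y : Vir, φ (virBracket x y) =
        (1 / 2 : ℂ) • (virBracket (φ x) y + virBracket x (φ y))) :
    ∃ κ : ℂ, φ = κ • LinearMap.id :=
  ⟨_, IsHalfDerivation.eq_smul_id hφ⟩
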